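/- Let M be a nonzero comultiplication R-module with exactly n < ∞ minimal submodules, n ≥ 2. Then the independence number of the large sum graph Ǵ(M) equals n; moreover the set of submodules of the form Σ_{j≠i} S_j (for S_j ranging over minimal submodules) is an independent set of size n. -/

import Mathlib

/-- `M` is a comultiplication `R`-module: every submodule is of the form `(0 :_M I)`. -/
def IsComultiplication (R M : Type*) [CommRing R] [AddCommGroup M] [Module R M] : Prop :=
  ∀ N : Submodule R M, ∃ I : Ideal R, ∀ m : M, m ∈ N ↔ ∀ r ∈ I, r • m = 0

/-- A submodule is large (essential) if it meets every nonzero submodule nontrivially. -/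
def IsLarge {R M : Type*} [CommRing R] [AddCommGroup M] [Module R M]
    (N : Submodule R M) : Prop :=
  ∀ L : Submodule R M, L ≠ ⊥ → N ⊓ L ≠ ⊥

/-- The vertices of the large sum graph: nonzero non-large submodules. -/
abbrev LargeSumVtx (R M : Type*) [CommRing R] [AddCommGroup M] [Module R M] :=
  {N : Submodule R M // N ≠ ⊥ ∧ ¬ IsLarge N}

/-- The large sum graph: distinct nonzero non-large submodules `N, K` are adjacent
iff `N + K` is not large. -/
def largeSumGraph (R M : Type*) [CommRing R] [AddCommGroup M] [Module R M] :
    SimpleGraph (LargeSumVtx R M) where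
  Adj N K := N ≠ K ∧ ¬ IsLarge (N.1 ⊔ K.1)
  symm := ⟨fun a b ⟨h1, h2⟩ => ⟨h1.symm, by rwa [sup_comm]⟩⟩
  loopless := ⟨fun a h => h.1 rfl⟩

/-! In a comultiplication module `N ↦ ann N` is an order-reversing embedding of submodules into
ideals. Hence every nonzero submodule contains a minimal one (Nakayama produces an element killed
by a maximal ideal), and a minimal `S`, whose annihilator is maximal and so prime, satisfies
`S ≤ A + B → S ≤ A ∨ S ≤ B`. So a submodule is large iff it contains every minimal submodule.
Each vertex `N` then misses some minimal `S_N`, and on an independent set `N ↦ S_N` is injective,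
so `α ≤ n`; conversely `Σ_{j ≠ i} S_j` misses exactly `S_i`, and any two of these sums add up to
a large submodule. -/

open Submodule

section Annihilator

variable (R : Type*) {M : Type*} [CommRing R] [AddCommGroup M] [Module R M]

theorem annihilator_span_singleton_ne_top {x : M} (hx : x ≠ 0) : (R ∙ x).annihilator ≠ ⊤ :=
  mt annihilator_eq_top_iff.mp ((span_singleton_eq_bot (R := R)).not.mpr hx)

variable {R}

theorem IsAtom.annihilator_isMaximal {S : Submodule R M} (hS : IsAtom S) :
    S.annihilator.IsMaximal :=
  have := isSimpleModule_iff_isAtom.mpr hS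
  IsSimpleModule.annihilator_isMaximal

end Annihilator

namespace IsComultiplication

variable {R M : Type*} [CommRing R] [AddCommGroup M] [Module R M] {N K S : Submodule R M}

theorem torsionBySet_annihilator (hc : IsComultiplication R M) (N : Submodule R M) :
    torsionBySet R M N.annihilator = N := by
  obtain ⟨I, hI⟩ := hc N
  obtain rfl : N = torsionBySet R M I := by ext m; simp [hI m]
  exact (torsion_gc R M).u_l_u_eq_u (OrderDual.toDual I)

theorem annihilator_le_annihilator_iff (hc : IsComultiplication R M) :
    N.annihilator ≤ K.annihilator ↔ K ≤ N := by
  refine ⟨fun h => ?_, annihilator_mono⟩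
  rw [← hc.torsionBySet_annihilator K, ← hc.torsionBySet_annihilator N]
  exact torsionBySet_le_torsionBySet_of_subset h

theorem annihilator_injective (hc : IsComultiplication R M) :
    Function.Injective (annihilator : Submodule R M → Ideal R) := fun _ _ h =>
  le_antisymm (hc.annihilator_le_annihilator_iff.mp h.ge)
    (hc.annihilator_le_annihilator_iff.mp h.le)

theorem isAtom_of_annihilator_isMaximal (hc : IsComultiplication R M)
    (hS : S.annihilator.IsMaximal) : IsAtom S := by
  refine ⟨fun h => hS.ne_top (annihilator_eq_top_iff.mpr h), fun K hK => ?_⟩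
  by_contra hK0
  have := hS.eq_of_le (mt annihilator_eq_top_iff.mp hK0) (annihilator_mono hK.le)
  exact hK.ne (hc.annihilator_injective this).symm

/-- Nakayama gives `p • (R ∙ x) ≠ R ∙ x` for a maximal `p ⊇ ann x`, so by comultiplicity some
`t` kills `p • (R ∙ x)` but not `x`. -/
theorem exists_annihilator_span_smul_isMaximal (hc : IsComultiplication R M) {x : M}
    (hx : x ≠ 0) : ∃ t : R, (R ∙ t • x).annihilator.IsMaximal := by
  set X : Submodule R M := R ∙ x
  obtain ⟨p, hp, hXp⟩ := Ideal.exists_le_maximal _ (annihilator_span_singleton_ne_top R hx)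
  have hpX : p • X ≠ X := by
    intro h
    obtain ⟨r, hr1, hr⟩ := exists_sub_one_mem_and_smul_eq_zero_of_fg_of_le_smul p X
      (fg_span_singleton x) h.ge
    have hrp : r ∈ p := hXp (mem_annihilator.mpr hr)
    exact hp.ne_top ((Ideal.eq_top_iff_one p).mpr (by simpa using p.sub_mem hrp hr1))
  obtain ⟨t, htpX, htX⟩ := SetLike.exists_of_lt <| (annihilator_mono smul_le_right).lt_of_ne
    fun h => hpX (hc.annihilator_injective h.symm)
  have htx : t • x ≠ 0 := by rwa [mem_annihilator_span_singleton] at htX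
  have hpt : p ≤ (R ∙ t • x).annihilator := fun r hr => by
    rw [mem_annihilator_span_singleton, smul_comm]
    exact mem_annihilator.mp htpX _ (smul_mem_smul hr (mem_span_singleton_self x))
  exact ⟨t, hp.eq_of_le (annihilator_span_singleton_ne_top R htx) hpt ▸ hp⟩

theorem exists_isAtom_le (hc : IsComultiplication R M) (hN : N ≠ ⊥) :
    ∃ S, IsAtom S ∧ S ≤ N := by
  obtain ⟨x, hxN, hx⟩ := exists_mem_ne_zero_of_ne_bot hN
  obtain ⟨t, ht⟩ := hc.exists_annihilator_span_smul_isMaximal hx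
  exact ⟨_, hc.isAtom_of_annihilator_isMaximal ht,
    (span_singleton_le_iff_mem _ _).mpr (N.smul_mem t hxN)⟩

theorem supPrime_of_isAtom (hc : IsComultiplication R M) (hS : IsAtom S) : SupPrime S := by
  refine ⟨fun h => hS.1 (h.eq_bot), fun {A B} h => ?_⟩
  have hmul : A.annihilator * B.annihilator ≤ S.annihilator :=
    Ideal.mul_le_inf.trans ((annihilator_sup A B) ▸ annihilator_mono h)
  simpa only [hc.annihilator_le_annihilator_iff] using
    hS.annihilator_isMaximal.isPrime.mul_le.mp hmul

theorem isLarge_iff_forall_isAtom_le (hc : IsComultiplication R M) :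
    IsLarge N ↔ ∀ S, IsAtom S → S ≤ N := by
  refine ⟨fun h S hS => ?_, fun h K hK hNK => ?_⟩
  · rw [← hS.not_disjoint_iff_le, disjoint_comm, disjoint_iff]
    exact h S hS.1
  · obtain ⟨S, hS, hSK⟩ := hc.exists_isAtom_le hK
    exact hS.1 (le_bot_iff.mp (hNK ▸ le_inf (h S hS) hSK))

end IsComultiplication

section LargeSumGraph

variable {R M : Type*} [CommRing R] [AddCommGroup M] [Module R M] {S T : Submodule R M}

def sumOtherAtoms (S : Submodule R M) : Submodule R M :=
  sSup {S' | IsAtom S' ∧ S' ≠ S}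

theorem sumOtherAtoms_ne_bot (hT : IsAtom T) (hTS : T ≠ S) : sumOtherAtoms S ≠ ⊥ :=
  ne_bot_of_le_ne_bot hT.1 (le_sSup ⟨hT, hTS⟩)

theorem IsComultiplication.isAtom_le_sumOtherAtoms_iff (hc : IsComultiplication R M)
    (hfin : {S : Submodule R M | IsAtom S}.Finite) (hT : IsAtom T) :
    T ≤ sumOtherAtoms S ↔ T ≠ S := by
  refine ⟨fun h => ?_, fun h => le_sSup ⟨hT, h⟩⟩
  have hfin' : {S' | IsAtom S' ∧ S' ≠ S}.Finite := hfin.subset fun _ h => h.1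
  rw [sumOtherAtoms, ← hfin'.coe_toFinset, ← Finset.sup_id_eq_sSup,
    (hc.supPrime_of_isAtom hT).le_finset_sup] at h
  obtain ⟨S', hS', hTS'⟩ := h
  rw [hfin'.mem_toFinset] at hS'
  rw [(hS'.1.le_iff_eq hT.1).mp hTS']
  exact hS'.2

theorem IsComultiplication.not_isLarge_sumOtherAtoms (hc : IsComultiplication R M)
    (hfin : {S : Submodule R M | IsAtom S}.Finite) (hS : IsAtom S) :
    ¬ IsLarge (sumOtherAtoms S) := fun h =>
  (hc.isAtom_le_sumOtherAtoms_iff hfin hS).mp (hc.isLarge_iff_forall_isAtom_le.mp h S hS) rfl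

theorem IsComultiplication.isLarge_sumOtherAtoms_sup (hc : IsComultiplication R M)
    (hST : S ≠ T) : IsLarge (sumOtherAtoms S ⊔ sumOtherAtoms T) := by
  refine hc.isLarge_iff_forall_isAtom_le.mpr fun U hU => ?_
  by_cases hUS : U = S
  · exact le_sup_of_le_right (le_sSup ⟨hU, hUS ▸ hST⟩)
  · exact le_sup_of_le_left (le_sSup ⟨hU, hUS⟩)

theorem IsComultiplication.injOn_sumOtherAtoms (hc : IsComultiplication R M)
    (hfin : {S : Submodule R M | IsAtom S}.Finite) :
    Set.InjOn sumOtherAtoms {S : Submodule R M | IsAtom S} := fun S hS T _ h => by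
  by_contra hST
  exact (hc.isAtom_le_sumOtherAtoms_iff hfin hS).mp (h ▸ le_sSup ⟨hS, hST⟩) rfl

theorem IsComultiplication.isIndepSet_sumOtherAtoms (hc : IsComultiplication R M) :
    (largeSumGraph R M).IsIndepSet {v | ∃ S, IsAtom S ∧ v.1 = sumOtherAtoms S} := by
  rintro u ⟨S, -, hu⟩ w ⟨T, -, hw⟩ huw ⟨-, hnl⟩
  refine hnl (hu ▸ hw ▸ hc.isLarge_sumOtherAtoms_sup ?_)
  rintro rfl
  exact huw (Subtype.ext (hu.trans hw.symm))

theorem IsComultiplication.card_sumOtherAtoms_vertices (hc : IsComultiplication R M)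
    (hfin : {S : Submodule R M | IsAtom S}.Finite)
    (hother : ∀ S : Submodule R M, ∃ T, IsAtom T ∧ T ≠ S) :
    Nat.card {v : LargeSumVtx R M | ∃ S, IsAtom S ∧ v.1 = sumOtherAtoms S} =
      Nat.card {S : Submodule R M | IsAtom S} := by
  have hvtx :
      sumOtherAtoms '' {S | IsAtom S} ⊆ Set.range (Subtype.val : LargeSumVtx R M → _) := by
    rintro _ ⟨S, hS, rfl⟩
    obtain ⟨T, hT, hTS⟩ := hother S
    exact ⟨⟨_, sumOtherAtoms_ne_bot hT hTS, hc.not_isLarge_sumOtherAtoms hfin hS⟩, rfl⟩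
  have hV : {v : LargeSumVtx R M | ∃ S, IsAtom S ∧ v.1 = sumOtherAtoms S} =
      Subtype.val ⁻¹' (sumOtherAtoms '' {S | IsAtom S}) := by
    ext v; simp [eq_comm]
  rw [Nat.card_coe_set_eq, Nat.card_coe_set_eq, hV,
    Set.ncard_preimage_of_injective_subset_range Subtype.val_injective hvtx,
    (hc.injOn_sumOtherAtoms hfin).ncard_image]

theorem IsComultiplication.card_le_of_isIndepSet (hc : IsComultiplication R M)
    (hfin : {S : Submodule R M | IsAtom S}.Finite) {s : Set (LargeSumVtx R M)}
    (hs : (largeSumGraph R M).IsIndepSet s) :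
    Nat.card s ≤ Nat.card {S : Submodule R M | IsAtom S} := by
  have hex (v : LargeSumVtx R M) : ∃ S, IsAtom S ∧ ¬ S ≤ v.1 := by
    simpa [hc.isLarge_iff_forall_isAtom_le] using v.2.2
  choose g hg hgv using hex
  refine Set.ncard_le_ncard_of_injOn g (fun v _ => hg v) (fun v hv w hw hvw => ?_) hfin
  by_contra hne
  have hlarge : IsLarge (v.1 ⊔ w.1) := not_not.mp fun h => hs hv hw hne ⟨hne, h⟩
  rcases (hc.supPrime_of_isAtom (hg v)).le_sup.mp
    (hc.isLarge_iff_forall_isAtom_le.mp hlarge _ (hg v)) with h | h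
  · exact hgv v h
  · exact hgv w (hvw ▸ h)

end LargeSumGraph

theorem stmt18_general {R M : Type*} [CommRing R] [AddCommGroup M] [Module R M]
    (hc : IsComultiplication R M)
    (hfin : {S : Submodule R M | IsAtom S}.Finite)
    (n : ℕ) (hn : Nat.card {S : Submodule R M | IsAtom S} = n) (hn2 : 2 ≤ n) :
    (∀ S : Submodule R M, IsAtom S →
      ∃ v : LargeSumVtx R M, v.1 = sSup {S' : Submodule R M | IsAtom S' ∧ S' ≠ S}) ∧
    ({v : LargeSumVtx R M |
        ∃ S : Submodule R M, IsAtom S ∧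
          v.1 = sSup {S' : Submodule R M | IsAtom S' ∧ S' ≠ S}}.Pairwise
      fun u w => ¬ (largeSumGraph R M).Adj u w) ∧
    Nat.card {v : LargeSumVtx R M |
        ∃ S : Submodule R M, IsAtom S ∧
          v.1 = sSup {S' : Submodule R M | IsAtom S' ∧ S' ≠ S}} = n ∧
    (∀ s : Set (LargeSumVtx R M),
      (s.Pairwise fun u w => ¬ (largeSumGraph R M).Adj u w) → Nat.card s ≤ n) := by
  have hother (S : Submodule R M) : ∃ T, IsAtom T ∧ T ≠ S :=
    Set.exists_ne_of_one_lt_ncard (hn ▸ hn2 : 1 < Nat.card _) S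
  refine ⟨fun S hS => ?_, hc.isIndepSet_sumOtherAtoms,
    hn ▸ hc.card_sumOtherAtoms_vertices hfin hother,
    fun s hs => hn ▸ hc.card_le_of_isIndepSet hfin hs⟩
  obtain ⟨T, hT, hTS⟩ := hother S
  exact ⟨⟨sumOtherAtoms S, sumOtherAtoms_ne_bot hT hTS, hc.not_isLarge_sumOtherAtoms hfin hS⟩,
    rfl⟩

/-- If a nonzero comultiplication module has exactly `n ≥ 2` minimal submodules, then the
independence number of its large sum graph is `n`: the sums `Σ_{j ≠ i} S_j` form an independent
set of size `n`, and every independent set has at most `n` elements. -/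
theorem stmt18 {R M : Type*} [CommRing R] [AddCommGroup M] [Module R M]
    [Nontrivial M] (hc : IsComultiplication R M)
    (hfin : {S : Submodule R M | IsAtom S}.Finite)
    (n : ℕ) (hn : Nat.card {S : Submodule R M | IsAtom S} = n) (hn2 : 2 ≤ n) :
    (∀ S : Submodule R M, IsAtom S →
      ∃ v : LargeSumVtx R M, v.1 = sSup {S' : Submodule R M | IsAtom S' ∧ S' ≠ S}) ∧
    ({v : LargeSumVtx R M |
        ∃ S : Submodule R M, IsAtom S ∧
          v.1 = sSup {S' : Submodule R M | IsAtom S' ∧ S' ≠ S}}.Pairwise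
      fun u w => ¬ (largeSumGraph R M).Adj u w) ∧
    Nat.card {v : LargeSumVtx R M |
        ∃ S : Submodule R M, IsAtom S ∧
          v.1 = sSup {S' : Submodule R M | IsAtom S' ∧ S' ≠ S}} = n ∧
    (∀ s : Set (LargeSumVtx R M),
      (s.Pairwise fun u w => ¬ (largeSumGraph R M).Adj u w) → Nat.card s ≤ n) :=
  stmt18_general hc hfin n hn hn2
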